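/- For the star with ℓ leaves and diameter 2, there exists a good system of categories with membership dimension at most 1 + 2⌈log₂ ℓ⌉. -/

import Mathlib

open Finset SimpleGraph

variable {V : Type*}

def catDist [DecidableEq V] (S : Finset (Finset V)) (s t : V) : ℕ :=
  (S.filter fun C => t ∈ C ∧ s ∉ C).card

def IsGoodSystem [DecidableEq V] (G : SimpleGraph V) (S : Finset (Finset V)) : Prop :=
  (∀ C ∈ S, (G.induce (C : Set V)).Connected) ∧
    ∀ s t : V, s ≠ t → ∃ u, G.Adj s u ∧ catDist S u t < catDist S s t

def memdim [DecidableEq V] [Fintype V] (S : Finset (Finset V)) : ℕ :=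
  univ.sup fun v : V => (S.filter fun C => v ∈ C).card

noncomputable def graphDiam [Fintype V] (G : SimpleGraph V) : ℕ :=
  univ.sup fun p : V × V => G.dist p.1 p.2

noncomputable def minMemdim (V : Type*) [DecidableEq V] [Fintype V] (G : SimpleGraph V) : ℕ :=
  sInf {m | ∃ S : Finset (Finset V), IsGoodSystem G S ∧ memdim S = m}

def starGraph (ℓ : ℕ) : SimpleGraph (Option (Fin ℓ)) where
  Adj a b := (a = none) ≠ (b = none)
  symm := ⟨fun _ _ h => h.symm⟩
  loopless := ⟨fun _ h => h rfl⟩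

/-!
Two leaves are separated by their own singleton categories and, since their indices differ in some
bit `i < ⌈log₂ ℓ⌉`, also by one of the two bit categories of position `i`; so from a leaf the centre
is strictly closer to any other leaf. Every non-singleton category contains the centre, which is
why stepping from a leaf to the centre leaves at most one category (the target's singleton) to
enter. A vertex lies in its own singleton and in one category of each bit pair.
-/

theorem Nat.exists_lt_testBit_ne {a b n : ℕ} (ha : a < 2 ^ n) (hb : b < 2 ^ n) (hab : a ≠ b) :
    ∃ i < n, a.testBit i ≠ b.testBit i := by
  by_contra! h
  refine hab (Nat.eq_of_testBit_eq fun i => ?_)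
  rcases lt_or_ge i n with hi | hi
  · exact h i hi
  · have hpow : 2 ^ n ≤ 2 ^ i := Nat.pow_le_pow_right two_pos hi
    rw [Nat.testBit_eq_false_of_lt (ha.trans_le hpow), Nat.testBit_eq_false_of_lt (hb.trans_le hpow)]

theorem SimpleGraph.induce_connected_of_forall_adj {G : SimpleGraph V} {s : Set V} {c : V}
    (hc : c ∈ s) (hadj : ∀ v ∈ s, c ≠ v → G.Adj c v) : (G.induce s).Connected :=
  Connected.of_isUniversal (v := ⟨c, hc⟩) fun w hw => hadj w w.2 (Subtype.coe_ne_coe.mpr hw)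

section CategoryDistance

variable [DecidableEq V]

theorem catDist_self (S : Finset (Finset V)) (t : V) : catDist S t t = 0 := by
  simp [catDist]

theorem catDist_self_lt_of_singleton_mem {S : Finset (Finset V)} {s t : V} (ht : {t} ∈ S)
    (hst : s ≠ t) : catDist S t t < catDist S s t := by
  rw [catDist_self]
  exact card_pos.mpr ⟨{t}, mem_filter.mpr ⟨ht, mem_singleton_self t, by simpa using hst⟩⟩

end CategoryDistance

theorem starGraph_eq (ℓ : ℕ) : _root_.starGraph ℓ = SimpleGraph.starGraph none := by
  ext a b
  cases a <;> cases b <;> simp [_root_.starGraph]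

section StarSystem

variable {ℓ : ℕ}

/-- `bitCat ℓ i false` and `bitCat ℓ i true` are the categories `Z_i` and `O_i`. -/
def bitCat (ℓ i : ℕ) (b : Bool) : Finset (Option (Fin ℓ)) :=
  insert none ((univ.filter fun j : Fin ℓ => j.val.testBit i = b).map .some)

/-- Besides the paper's categories, the centre gets a singleton too: it is what makes a leaf's
step to the centre decrease the category distance to the centre when `ℓ = 1`, where there are no
bit categories. -/
def starCats (ℓ : ℕ) : Finset (Finset (Option (Fin ℓ))) :=
  univ.map ⟨singleton, singleton_injective⟩ ∪
    univ.image fun p : Fin (Nat.clog 2 ℓ) × Bool => bitCat ℓ p.1 p.2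

theorem none_mem_bitCat (i : ℕ) (b : Bool) : none ∈ bitCat ℓ i b :=
  mem_insert_self _ _

theorem some_mem_bitCat_iff {i : ℕ} {b : Bool} {j : Fin ℓ} :
    some j ∈ bitCat ℓ i b ↔ j.val.testBit i = b := by
  simp [bitCat]

theorem singleton_mem_starCats (v : Option (Fin ℓ)) : {v} ∈ starCats ℓ :=
  mem_union_left _ (mem_map_of_mem _ (mem_univ v))

theorem bitCat_mem_starCats {i : ℕ} (hi : i < Nat.clog 2 ℓ) (b : Bool) :
    bitCat ℓ i b ∈ starCats ℓ :=
  mem_union_right _ (mem_image.mpr ⟨(⟨i, hi⟩, b), mem_univ _, rfl⟩)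

theorem mem_starCats {C : Finset (Option (Fin ℓ))} :
    C ∈ starCats ℓ ↔ (∃ v, C = {v}) ∨ ∃ i < Nat.clog 2 ℓ, ∃ b, C = bitCat ℓ i b := by
  simp only [starCats, mem_union, mem_map, mem_image, mem_univ, true_and, Prod.exists]
  constructor
  · rintro (⟨v, rfl⟩ | ⟨i, b, rfl⟩)
    exacts [.inl ⟨v, rfl⟩, .inr ⟨i, i.2, b, rfl⟩]
  · rintro (⟨v, rfl⟩ | ⟨i, hi, b, rfl⟩)
    exacts [.inl ⟨v, rfl⟩, .inr ⟨⟨i, hi⟩, b, rfl⟩]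

theorem catDist_starCats_none_le_one (k : Fin ℓ) : catDist (starCats ℓ) none (some k) ≤ 1 := by
  refine card_le_one.mpr fun C hC D hD => ?_
  have key : ∀ C ∈ (starCats ℓ).filter fun C => some k ∈ C ∧ none ∉ C, C = {some k} := by
    intro C hC
    obtain ⟨hC, hkC, hnC⟩ := mem_filter.mp hC
    rcases mem_starCats.mp hC with ⟨v, rfl⟩ | ⟨i, -, b, rfl⟩
    · rw [mem_singleton.mp hkC]
    · exact absurd (none_mem_bitCat i b) hnC
  rw [key C hC, key D hD]

theorem two_le_catDist_starCats {j k : Fin ℓ} (hjk : j ≠ k) :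
    2 ≤ catDist (starCats ℓ) (some j) (some k) := by
  have hℓ : ℓ ≤ 2 ^ Nat.clog 2 ℓ := Nat.le_pow_clog one_lt_two ℓ
  obtain ⟨i, hi, hbit⟩ := Nat.exists_lt_testBit_ne (j.2.trans_le hℓ) (k.2.trans_le hℓ)
    (Fin.val_ne_of_ne hjk)
  refine one_lt_card.mpr ⟨{some k}, ?_, bitCat ℓ i (k.val.testBit i), ?_, ?_⟩
  · exact mem_filter.mpr ⟨singleton_mem_starCats _, mem_singleton_self _, by simpa using hjk⟩
  · exact mem_filter.mpr ⟨bitCat_mem_starCats hi _, some_mem_bitCat_iff.mpr rfl,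
      fun h => hbit (some_mem_bitCat_iff.mp h)⟩
  · intro h
    have := none_mem_bitCat (ℓ := ℓ) i (k.val.testBit i)
    rw [← h] at this
    simp at this

theorem isGoodSystem_starCats : IsGoodSystem (_root_.starGraph ℓ) (starCats ℓ) := by
  rw [starGraph_eq]
  refine ⟨fun C hC => ?_, fun s t hst => ?_⟩
  · rcases mem_starCats.mp hC with ⟨v, rfl⟩ | ⟨i, -, b, rfl⟩
    · exact induce_connected_of_forall_adj (mem_singleton_self v)
        fun w hw hvw => absurd (mem_singleton.mp hw).symm hvw
    · exact induce_connected_of_forall_adj (by simpa using none_mem_bitCat i b)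
        fun w _ hw => starGraph_center_adj hw
  rcases s with _ | j <;> rcases t with _ | k
  · exact absurd rfl hst
  · exact ⟨some k, starGraph_center_adj hst, catDist_self_lt_of_singleton_mem
      (singleton_mem_starCats _) hst⟩
  · exact ⟨none, starGraph_center_adj' hst.symm, catDist_self_lt_of_singleton_mem
      (singleton_mem_starCats _) hst⟩
  · refine ⟨none, starGraph_center_adj' (Option.some_ne_none j).symm, ?_⟩
    have hjk : j ≠ k := fun h => hst (congrArg some h)
    exact (catDist_starCats_none_le_one k).trans_lt (two_le_catDist_starCats hjk)

theorem memdim_starCats_le : memdim (starCats ℓ) ≤ 1 + 2 * Nat.clog 2 ℓ := by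
  refine Finset.sup_le fun v _ => ?_
  set bitCats := univ.image fun p : Fin (Nat.clog 2 ℓ) × Bool => bitCat ℓ p.1 p.2
  have hsub : (starCats ℓ).filter (v ∈ ·) ⊆ insert {v} bitCats := by
    intro C hC
    obtain ⟨hC, hvC⟩ := mem_filter.mp hC
    rcases mem_union.mp hC with h | h
    · obtain ⟨w, -, rfl⟩ := mem_map.mp h
      simp [mem_singleton.mp hvC]
    · exact mem_insert_of_mem h
  calc #((starCats ℓ).filter (v ∈ ·))
      ≤ #bitCats + 1 := (card_le_card hsub).trans (card_insert_le _ _)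
    _ ≤ #(univ : Finset (Fin (Nat.clog 2 ℓ) × Bool)) + 1 := by gcongr; exact card_image_le
    _ = 1 + 2 * Nat.clog 2 ℓ := by simp [Nat.mul_comm, Nat.add_comm]

end StarSystem

theorem stmt9_general (ℓ : ℕ) :
    ∃ S : Finset (Finset (Option (Fin ℓ))),
      IsGoodSystem (_root_.starGraph ℓ) S ∧ memdim S ≤ 1 + 2 * Nat.clog 2 ℓ :=
  ⟨starCats ℓ, isGoodSystem_starCats, memdim_starCats_le⟩

theorem stmt9 (ℓ : ℕ) (hℓ : 1 ≤ ℓ) :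
    ∃ S : Finset (Finset (Option (Fin ℓ))),
      IsGoodSystem (_root_.starGraph ℓ) S ∧ memdim S ≤ 1 + 2 * Nat.clog 2 ℓ :=
  stmt9_general ℓ
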